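/- arXiv:2108.09785 — 4 statements merged into one kernel-verified Lean document; each statement's English description precedes it below -/
import Mathlib

section
/- Under the substitution x = v/(1+3v+v²), the power series P(x) = (1+x-√(1-6x+5x²))/2 satisfies P = v(v+2)/(1+3v+v²), and √(1-6x+5x²) = (1-v²)/(1+3v+v²). -/
open PowerSeries

/-! Multiplying `W² = 1 - 6x + 5x²` by `(1 + 3v + v²)²` and using `x (1 + 3v + v²) = v` gives
`(W (1 + 3v + v²))² = (1 - v²)²`. In the domain `ℚ⟦v⟧` this leaves `W (1 + 3v + v²) = ±(1 - v²)`,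
and the constant term `1` of `W` fixes the sign; the formula for `P` is then linear. -/

theorem PowerSeries.eq_of_sq_eq_sq_of_constantCoeff_eq {R : Type*} [CommRing R] [IsDomain R]
    [IsAddTorsionFree R] {f g : R⟦X⟧} (h : f ^ 2 = g ^ 2)
    (h0 : constantCoeff f = constantCoeff g) (hg : constantCoeff g ≠ 0) : f = g := by
  refine (sq_eq_sq_iff_eq_or_eq_neg.mp h).resolve_right fun hneg => hg ?_
  have := congrArg constantCoeff hneg
  rw [map_neg, h0] at this
  exact self_eq_neg.mp this

/-- Under the substitution `x = v/(1+3v+v²)` (as formal power series in `v`),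
the series `P = (1+x-√(1-6x+5x²))/2` satisfies `P = v(v+2)/(1+3v+v²)` and
`√(1-6x+5x²) = (1-v²)/(1+3v+v²)`, where the square root `W` is the unique
power series with `W² = 1-6x+5x²` and constant term 1. -/
theorem substitution_identity (x W P : PowerSeries ℚ)
    (hx : x * (1 + 3 * X + X ^ 2) = X)
    (hW : W ^ 2 = 1 - 6 * x + 5 * x ^ 2)
    (hW0 : PowerSeries.coeff 0 W = 1)
    (hP : 2 * P = 1 + x - W) :
    P * (1 + 3 * X + X ^ 2) = X * (X + 2) ∧
    W * (1 + 3 * X + X ^ 2) = 1 - X ^ 2 := by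
  have hsq : (W * (1 + 3 * X + X ^ 2)) ^ 2 = (1 - X ^ 2) ^ 2 := by
    linear_combination (1 + 3 * X + X ^ 2) ^ 2 * hW +
      (5 * (x * (1 + 3 * X + X ^ 2) + X) - 6 * (1 + 3 * X + X ^ 2)) * hx
  have hWD : W * (1 + 3 * X + X ^ 2) = 1 - X ^ 2 := by
    refine eq_of_sq_eq_sq_of_constantCoeff_eq hsq ?_ (by simp)
    rw [coeff_zero_eq_constantCoeff_apply] at hW0
    simp [hW0]
  have h2 : (2 : ℚ⟦X⟧) ≠ 0 := fun h => by
    simpa [map_ofNat] using congrArg constantCoeff h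
  refine ⟨mul_left_cancel₀ h2 ?_, hWD⟩
  linear_combination (1 + 3 * X + X ^ 2) * hP + hx - hWD
end

section
/- The generating function S(0) = (1 - wx - √(1-(4+2w)x+(4w+w²)x²))/(2x), counting skew Dyck paths of semilength n by number of red (south-west) edges (marked by w), has expansion 1 + x + (w+2)x² + (w²+4w+5)x³ + (w³+6w²+15w+14)x⁴ + O(x⁵). -/
/-!
Eliminating the square root: substituting `W = 1 - wx - 2xS` into `W² = 1 - (4+2w)x + (4w+w²)x²`
leaves `4x · (S - 1 - x(S² + w(S - 1))) = 0`, so `S` satisfies the skew Dyck functional equation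
`S = 1 + x(S² + w(S - 1))`. Comparing coefficients gives `s₀ = s₁ = 1` and
`s_{n+2} = ∑_{i+j=n+1} sᵢ sⱼ + w s_{n+1}`, from which the first five coefficients are computed.
-/

open PowerSeries Finset

namespace PowerSeries

variable {R : Type*} [CommRing R]

theorem eq_one_add_X_mul_of_two_mul_X_mul_eq [IsDomain R] [CharZero R] {W S : R⟦X⟧} {a : R}
    (hW : W ^ 2 = 1 - (4 + 2 * C a) * X + (4 * C a + C a ^ 2) * X ^ 2)
    (hS : 2 * X * S = 1 - C a * X - W) :
    S = 1 + X * (S ^ 2 + C a * (S - 1)) := by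
  have h4 : (4 : R⟦X⟧) ≠ 0 := by
    rw [← map_ofNat C 4]
    exact (map_ne_zero_iff _ (C_injective (R := R))).2 (by norm_num)
  have hprod : 4 * X * (S - (1 + X * (S ^ 2 + C a * (S - 1)))) = 0 := by
    linear_combination -hW + (W + 1 - C a * X - 2 * X * S) * hS
  exact sub_eq_zero.1 <| (mul_eq_zero.1 hprod).resolve_left (mul_ne_zero h4 X_ne_zero)

section FunctionalEquation

variable {S : R⟦X⟧} {a : R} (h : S = 1 + X * (S ^ 2 + C a * (S - 1)))
include h

theorem coeff_zero_of_eq_one_add_X_mul : coeff 0 S = 1 := by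
  rw [h]
  simp

theorem coeff_one_of_eq_one_add_X_mul : coeff 1 S = 1 := by
  have s0 : constantCoeff S = 1 := by simpa using coeff_zero_of_eq_one_add_X_mul h
  conv_lhs => rw [h]
  simp [sq, s0]

theorem coeff_add_two_of_eq_one_add_X_mul (n : ℕ) :
    coeff (n + 2) S
      = ∑ p ∈ antidiagonal (n + 1), coeff p.1 S * coeff p.2 S + a * coeff (n + 1) S := by
  conv_lhs => rw [h]
  rw [map_add, coeff_succ_X_mul, coeff_one, if_neg (by omega), zero_add, map_add, sq, coeff_mul,
    coeff_C_mul, map_sub, coeff_one, if_neg (by omega), sub_zero]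

end FunctionalEquation

end PowerSeries

theorem redEdge_genFun_expansion_general
    (W S : PowerSeries (Polynomial ℚ))
    (w : PowerSeries (Polynomial ℚ))
    (hw : w = PowerSeries.C Polynomial.X)
    (hW : W ^ 2 = 1 - (4 + 2 * w) * PowerSeries.X
        + (4 * w + w ^ 2) * PowerSeries.X ^ 2)
    (hS : 2 * PowerSeries.X * S = 1 - w * PowerSeries.X - W) :
    PowerSeries.coeff 0 S = 1 ∧
    PowerSeries.coeff 1 S = 1 ∧
    PowerSeries.coeff 2 S = Polynomial.X + 2 ∧
    PowerSeries.coeff 3 S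
      = Polynomial.X ^ 2 + 4 * Polynomial.X + 5 ∧
    PowerSeries.coeff 4 S
      = Polynomial.X ^ 3 + 6 * Polynomial.X ^ 2 + 15 * Polynomial.X + 14 := by
  subst hw
  have hfun := eq_one_add_X_mul_of_two_mul_X_mul_eq hW hS
  have s0 := coeff_zero_of_eq_one_add_X_mul hfun
  have s1 := coeff_one_of_eq_one_add_X_mul hfun
  have s2 : coeff 2 S = Polynomial.X + 2 := by
    rw [coeff_add_two_of_eq_one_add_X_mul hfun]
    simp only [Finset.Nat.sum_antidiagonal_succ, Nat.antidiagonal_zero, sum_singleton, s0, s1]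
    ring
  have s3 : coeff 3 S = Polynomial.X ^ 2 + 4 * Polynomial.X + 5 := by
    rw [coeff_add_two_of_eq_one_add_X_mul hfun]
    simp only [Finset.Nat.sum_antidiagonal_succ, Nat.antidiagonal_zero, sum_singleton, s0, s1, s2]
    ring
  refine ⟨s0, s1, s2, s3, ?_⟩
  rw [coeff_add_two_of_eq_one_add_X_mul hfun]
  simp only [Finset.Nat.sum_antidiagonal_succ, Nat.antidiagonal_zero, sum_singleton, s0, s1, s2,
    s3]
  ring

/-- In `ℚ[w][[x]]`, let `w` denote the constant series `w` and let `W` be the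
power-series square root (constant term 1) of `1-(4+2w)x+(4w+w²)x²`.  The
red-edge-counting generating function `S(0)`, defined by
`2x·S(0) = 1 - wx - W`, has expansion
`1 + x + (w+2)x² + (w²+4w+5)x³ + (w³+6w²+15w+14)x⁴ + O(x⁵)`. -/
theorem redEdge_genFun_expansion
    (W S : PowerSeries (Polynomial ℚ))
    (w : PowerSeries (Polynomial ℚ))
    (hw : w = PowerSeries.C Polynomial.X)
    (hW : W ^ 2 = 1 - (4 + 2 * w) * PowerSeries.X
        + (4 * w + w ^ 2) * PowerSeries.X ^ 2)
    (hW0 : PowerSeries.coeff 0 W = 1)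
    (hS : 2 * PowerSeries.X * S = 1 - w * PowerSeries.X - W) :
    PowerSeries.coeff 0 S = 1 ∧
    PowerSeries.coeff 1 S = 1 ∧
    PowerSeries.coeff 2 S = Polynomial.X + 2 ∧
    PowerSeries.coeff 3 S
      = Polynomial.X ^ 2 + 4 * Polynomial.X + 5 ∧
    PowerSeries.coeff 4 S
      = Polynomial.X ^ 3 + 6 * Polynomial.X ^ 2 + 15 * Polynomial.X + 14 :=
  redEdge_genFun_expansion_general W S w hw hW hS
end

section
/- Under the substitution z = v/(1+(2+w)v+v²), the series S(0) = (1 - wz - √(1-(4+2w)z+(4w+w²)z²))/(2z) (with z in place of z² i.e. x = z) equals 1 + v. -/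
open PowerSeries

/-!
Since `x (1 + (2 + w) v + v²) = v`, the discriminant `1 - (4 + 2w) x + (4w + w²) x²` is the
square of `1 - w x - 2 x (1 + v)`, whose constant term is `1` because `x` has none. Over a domain in
which `2 ≠ 0` a power series with constant term `1` is determined by its square, so this is `W`,
and cancelling `2x` in `2x S = 1 - w x - W` leaves `S = 1 + v`.
-/

theorem sq_eq_discriminant_of_mul_eq {A : Type*} [CommRing A] {x w v : A}
    (hx : x * (1 + (2 + w) * v + v ^ 2) = v) :
    (1 - w * x - 2 * x * (1 + v)) ^ 2 = 1 - (4 + 2 * w) * x + (4 * w + w ^ 2) * x ^ 2 := by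
  linear_combination (4 * x) * hx

namespace PowerSeries

variable {R : Type*} [CommRing R]

instance [CharZero R] : CharZero R⟦X⟧ := charZero_of_injective_ringHom C_injective

theorem eq_of_sq_eq_sq_of_constantCoeff_eq_one [IsDomain R] [NeZero (2 : R)] {f g : R⟦X⟧}
    (h : f ^ 2 = g ^ 2) (hf : constantCoeff f = 1) (hg : constantCoeff g = 1) : f = g := by
  refine (sq_eq_sq_iff_eq_or_eq_neg.mp h).resolve_right fun hneg => two_ne_zero (α := R) ?_
  have h1 : constantCoeff f = -constantCoeff g := by rw [hneg, map_neg]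
  rw [hf, hg] at h1
  linear_combination h1

end PowerSeries

theorem redEdge_substitution_general
    (x W S : PowerSeries (Polynomial ℚ))
    (w : PowerSeries (Polynomial ℚ))
    (hx : x * (1 + (2 + w) * PowerSeries.X + PowerSeries.X ^ 2) = PowerSeries.X)
    (hW : W ^ 2 = 1 - (4 + 2 * w) * x + (4 * w + w ^ 2) * x ^ 2)
    (hW0 : PowerSeries.coeff 0 W = 1)
    (hS : 2 * x * S = 1 - w * x - W) :
    S = 1 + PowerSeries.X := by
  have hx0 : constantCoeff x = 0 := by simpa using congrArg constantCoeff hx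
  have hx_ne : x ≠ 0 := by
    rintro rfl
    exact X_ne_zero (R := Polynomial ℚ) (by simpa using hx.symm)
  have hW_eq : W = 1 - w * x - 2 * x * (1 + X) :=
    eq_of_sq_eq_sq_of_constantCoeff_eq_one (hW.trans (sq_eq_discriminant_of_mul_eq hx).symm)
      (by simpa using hW0) (by simp [hx0])
  refine mul_left_cancel₀ (mul_ne_zero two_ne_zero hx_ne) ?_
  rw [hS, hW_eq]
  ring

/-- In `ℚ[w][[v]]`, under the substitution `x = v/(1+(2+w)v+v²)`, the series
`S(0) = (1 - wx - √(1-(4+2w)x+(4w+w²)x²))/(2x)` equals `1 + v`. Here the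
square root `W` is the power series with `W² = 1-(4+2w)x+(4w+w²)x²` and
constant term 1, and `S` is defined by `2x·S = 1 - wx - W`. -/
theorem redEdge_substitution
    (x W S : PowerSeries (Polynomial ℚ))
    (w : PowerSeries (Polynomial ℚ))
    (hw : w = PowerSeries.C (Polynomial.X : Polynomial ℚ))
    (hx : x * (1 + (2 + w) * PowerSeries.X + PowerSeries.X ^ 2) = PowerSeries.X)
    (hW : W ^ 2 = 1 - (4 + 2 * w) * x + (4 * w + w ^ 2) * x ^ 2)
    (hW0 : PowerSeries.coeff 0 W = 1)
    (hS : 2 * x * S = 1 - w * x - W) :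
    S = 1 + PowerSeries.X :=
  redEdge_substitution_general x W S w hx hW hW0 hS
end

section
/- The coefficient of w² in S(0) = (1 - wx - √(1-(4+2w)x+(4w+w²)x²))/(2x) equals x³/(1-4x)^{3/2}. -/
/-!
Write `W = W₀ + W₁ w + W₂ w² + O(w³)` with `Wᵢ ∈ ℚ⟦x⟧`. Comparing the coefficients of
`w⁰, w¹, w²` in `W² = 1 - (4 + 2w)x + (4w + w²)x²` gives `W₀² = 1 - 4x`,
`W₀ W₁ = x(2x - 1)` and `2 W₀ W₂ + W₁² = x²`, and the constant term `1` forces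
`W₀ = √(1 - 4x)`. The coefficient of `w²` in `2x S = 1 - wx - W` is `2x T = -W₂`, so
`4x T W₀³ = -W₀² (2 W₀ W₂) = (W₀ W₁)² - x² W₀² = 4x⁴`.
-/

open PowerSeries

namespace PowerSeries

variable {R : Type*}

section Semiring

variable [Semiring R]

/-- `polyCoeff k F = [wᵏ] F` for `F ∈ R[w]⟦x⟧`. -/
noncomputable def polyCoeff (k : ℕ) : (Polynomial R)⟦X⟧ →+ R⟦X⟧ where
  toFun F := mk fun n => (coeff n F).coeff k
  map_zero' := by ext; simp
  map_add' F G := by ext; simp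

@[simp]
theorem coeff_polyCoeff (k n : ℕ) (F : (Polynomial R)⟦X⟧) :
    coeff n (polyCoeff k F) = (coeff n F).coeff k := by
  simp [polyCoeff]

@[simp]
theorem constantCoeff_polyCoeff (k : ℕ) (F : (Polynomial R)⟦X⟧) :
    constantCoeff (polyCoeff k F) = (constantCoeff F).coeff k := by
  rw [← coeff_zero_eq_constantCoeff_apply, coeff_polyCoeff, coeff_zero_eq_constantCoeff_apply]

open Finset in
theorem polyCoeff_mul (k : ℕ) (F G : (Polynomial R)⟦X⟧) :
    polyCoeff k (F * G) = ∑ p ∈ antidiagonal k, polyCoeff p.1 F * polyCoeff p.2 G := by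
  ext n
  simp only [coeff_polyCoeff, coeff_mul, Polynomial.finsetSum_coeff, Polynomial.coeff_mul,
    map_sum]
  exact Finset.sum_comm

theorem polyCoeff_C_mul_X_pow (k n : ℕ) (p : Polynomial R) :
    polyCoeff k (C p * X ^ n) = C (p.coeff k) * X ^ n := by
  ext m
  simp only [coeff_polyCoeff, coeff_C_mul_X_pow]
  split_ifs <;> simp

theorem polyCoeff_C_mul_X (k : ℕ) (p : Polynomial R) :
    polyCoeff k (C p * X) = C (p.coeff k) * X := by
  simpa using polyCoeff_C_mul_X_pow k 1 p

theorem polyCoeff_one (k : ℕ) :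
    polyCoeff k (1 : (Polynomial R)⟦X⟧) = C ((1 : Polynomial R).coeff k) := by
  simpa using polyCoeff_C_mul_X_pow k 0 (1 : Polynomial R)

theorem polyCoeff_map_C_mul (k : ℕ) (g : R⟦X⟧) (F : (Polynomial R)⟦X⟧) :
    polyCoeff k (map Polynomial.C g * F) = g * polyCoeff k F := by
  ext n
  simp [coeff_mul, Polynomial.finsetSum_coeff]

end Semiring

section CommSemiring

variable [CommSemiring R] (F : (Polynomial R)⟦X⟧)

theorem polyCoeff_zero_sq : polyCoeff 0 (F ^ 2) = polyCoeff 0 F ^ 2 := by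
  simp [sq, polyCoeff_mul]

theorem polyCoeff_one_sq : polyCoeff 1 (F ^ 2) = 2 * polyCoeff 0 F * polyCoeff 1 F := by
  simp [sq, polyCoeff_mul, Finset.Nat.sum_antidiagonal_succ]
  ring

theorem polyCoeff_two_sq :
    polyCoeff 2 (F ^ 2) = 2 * polyCoeff 0 F * polyCoeff 2 F + polyCoeff 1 F ^ 2 := by
  simp [sq, polyCoeff_mul, Finset.Nat.sum_antidiagonal_succ]
  ring

end CommSemiring

instance [Semiring R] [CharZero R] : CharZero R⟦X⟧ where
  cast_injective m n h := by simpa using congrArg constantCoeff h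

theorem eq_of_sq_eq_of_constantCoeff_eq [CommRing R] [NoZeroDivisors R] [IsAddTorsionFree R]
    {a b : R⟦X⟧} (h : a ^ 2 = b ^ 2) (hc : constantCoeff a = constantCoeff b)
    (hb : constantCoeff b ≠ 0) : a = b := by
  refine (sq_eq_sq_iff_eq_or_eq_neg.mp h).resolve_right fun hneg => hb ?_
  rw [hneg, map_neg] at hc
  exact neg_eq_self.mp hc

end PowerSeries

/-- The coefficient of `w²` in `S(0) = (1 - wx - √(1-(4+2w)x+(4w+w²)x²))/(2x)`
equals `x³/(1-4x)^{3/2}`, i.e. the series `T` with coefficients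
`[wⁿ²]` satisfies `T·(√(1-4x))³ = x³`. -/
theorem redEdge_w2
    (W S : PowerSeries (Polynomial ℚ))
    (w : PowerSeries (Polynomial ℚ))
    (hw : w = PowerSeries.C (R := Polynomial ℚ) Polynomial.X)
    (hW : W ^ 2 = 1 - (4 + 2 * w) * PowerSeries.X
        + (4 * w + w ^ 2) * PowerSeries.X ^ 2)
    (hW0 : PowerSeries.coeff (R := Polynomial ℚ) 0 W = 1)
    (hS : 2 * PowerSeries.X * S = 1 - w * PowerSeries.X - W)
    (T : PowerSeries ℚ)
    (hT : ∀ n : ℕ, (PowerSeries.coeff (R := Polynomial ℚ) n S).coeff 2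
        = PowerSeries.coeff (R := ℚ) n T)
    (V : PowerSeries ℚ)
    (hV : V ^ 2 = 1 - 4 * PowerSeries.X)
    (hV0 : PowerSeries.coeff (R := ℚ) 0 V = 1) :
    T * V ^ 3 = PowerSeries.X ^ 3 := by
  subst hw
  have hW' : W ^ 2 = 1 - C (4 + 2 * Polynomial.X) * X
      + C (4 * Polynomial.X + Polynomial.X ^ 2) * X ^ 2 := by
    rw [hW]; simp [map_ofNat]
  have hS' : map Polynomial.C (2 * X) * S = 1 - C Polynomial.X * X - W := by
    simp [map_ofNat]; linear_combination hS
  have hW_coeff (k : ℕ) := congrArg (polyCoeff k) hW'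
  simp only [AddMonoidHom.map_add, AddMonoidHom.map_sub, polyCoeff_one, polyCoeff_C_mul_X,
    polyCoeff_C_mul_X_pow, Polynomial.coeff_one] at hW_coeff
  have hS_coeff := congrArg (polyCoeff 2) hS'
  simp only [polyCoeff_map_C_mul, AddMonoidHom.map_sub, polyCoeff_one, polyCoeff_C_mul_X,
    Polynomial.coeff_one, Polynomial.coeff_X] at hS_coeff
  set W₀ := polyCoeff 0 W
  set W₁ := polyCoeff 1 W
  set W₂ := polyCoeff 2 W
  have hW₀ : W₀ ^ 2 = 1 - 4 * X := by
    simpa [polyCoeff_zero_sq, map_ofNat] using hW_coeff 0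
  have hW₁ : W₀ * W₁ = X * (2 * X - 1) := by
    have h := hW_coeff 1
    simp [polyCoeff_one_sq, map_ofNat] at h
    exact mul_left_cancel₀ two_ne_zero (by linear_combination h)
  have hW₂ : 2 * W₀ * W₂ + W₁ ^ 2 = X ^ 2 := by
    simpa [polyCoeff_two_sq, Polynomial.coeff_X] using hW_coeff 2
  have hT₂ : W₂ = -(2 * X * T) := by
    have hST : polyCoeff 2 S = T := by ext n; simp [hT]
    simp [hST] at hS_coeff
    linear_combination hS_coeff
  obtain rfl : W₀ = V :=
    eq_of_sq_eq_of_constantCoeff_eq (hW₀.trans hV.symm) (by simp_all [W₀]) (by simp_all)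
  refine mul_left_cancel₀ (mul_ne_zero (by norm_num : (4 : ℚ⟦X⟧) ≠ 0) X_ne_zero) ?_
  calc 4 * X * (T * W₀ ^ 3)
      = -W₀ ^ 2 * (2 * W₀ * W₂) := by rw [hT₂]; ring
    _ = (W₀ * W₁) ^ 2 - X ^ 2 * W₀ ^ 2 := by linear_combination -W₀ ^ 2 * hW₂
    _ = 4 * X * X ^ 3 := by rw [hW₁, hW₀]; ring
end
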